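/- arXiv:2507.13958 — 3 statements merged into one kernel-verified Lean document; each statement's English description precedes it below -/
import Mathlib

section
/- The map δ from HT traces to HTc traces over the Boolean encoding, defined by v_{h,i}(p) = t if p ∈ H_i and u otherwise (similarly for t-components), is a bijection between HT traces of length λ over atoms A and HTc traces of length λ over signature ⟨A, {t}, {p = t | p ∈ A}⟩. -/
open Classical

/-- An HT trace of length `lam` over Boolean atoms `A`: a pair
`⟨(H_i), (T_i)⟩` with `H_i ⊆ T_i ⊆ A`. -/
def HTTrace (A : Type) (lam : ℕ) :=
  {p : (Fin lam → Set A) × (Fin lam → Set A) // ∀ i, p.1 i ⊆ p.2 i}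

/-- An HTc trace of length `lam` over variables `A` and domain `{t}`
(modeled as `Unit`, with `none` the undefined value `u`): a pair `⟨vh,vt⟩`
with `vh ⊑ vt` pointwise. -/
def HTcTrace (A : Type) (lam : ℕ) :=
  {p : (Fin lam → A → Option Unit) × (Fin lam → A → Option Unit) //
    ∀ i a, p.1 i a = some () → p.2 i a = some ()}

/-- The valuation encoding a set of atoms: `p ↦ t` if `p ∈ S`, else `u`. -/
noncomputable def toVal {A : Type} {lam : ℕ} (S : Fin lam → Set A) :
    Fin lam → A → Option Unit :=
  fun i a => if a ∈ S i then some () else none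

/-- The map `δ` from HT traces to HTc traces over the Boolean encoding. -/
noncomputable def δ {A : Type} {lam : ℕ} (M : HTTrace A lam) : HTcTrace A lam :=
  ⟨(toVal M.1.1, toVal M.1.2), by
    intro i a h
    simp only [toVal] at h ⊢
    by_cases hmem : a ∈ M.1.1 i
    · simp [M.2 i hmem]
    · simp [hmem] at h⟩

theorem aux_if (P : Prop) [inst : Decidable P] (x : Option Unit) (h : P ↔ x = some ()) :
    (if P then some () else none) = x := by
  split
  · exact (h.mp ‹P›).symm
  · rcases x with _ | ⟨⟩
    · rfl
    · exact absurd (h.mpr rfl) ‹¬P›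

/-- `δ` is a bijection between HT traces of length `lam` over atoms `A` and
HTc traces of length `lam` over signature `⟨A, {t}, {p = t | p ∈ A}⟩`. -/
theorem delta_bijective (A : Type) (lam : ℕ) :
    Function.Bijective (δ (A := A) (lam := lam)) := by
  constructor
  · intro M N h
    have h1 := congrArg (fun x => x.1.1) h
    have h2 := congrArg (fun x => x.1.2) h
    simp only [δ] at h1 h2
    apply Subtype.ext
    apply Prod.ext
    · funext i
      ext a
      have := congrFun (congrFun h1 i) a
      simp only [toVal] at this
      by_cases hm : a ∈ M.1.1 i <;> by_cases hn : a ∈ N.1.1 i <;>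
        simp [hm, hn] at this ⊢
    · funext i
      ext a
      have := congrFun (congrFun h2 i) a
      simp only [toVal] at this
      by_cases hm : a ∈ M.1.2 i <;> by_cases hn : a ∈ N.1.2 i <;>
        simp [hm, hn] at this ⊢
  · intro V
    refine ⟨⟨(fun i => {a | V.1.1 i a = some ()}, fun i => {a | V.1.2 i a = some ()}),
      fun i a ha => V.2 i a ha⟩, ?_⟩
    apply Subtype.ext
    apply Prod.ext
    · funext i a
      exact aux_if (inst := Classical.propDecidable _) _ _ Iff.rfl
    · funext i a
      exact aux_if (inst := Classical.propDecidable _) _ _ Iff.rfl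
end

section
/- The converse of the complement property fails: there exist an HTc trace M and complementary strict constraint atoms c, c̄ such that M,0 ⊨ ¬c̄ but M,0 ⊭ c. Concretely, for the atoms ○x = x and ○x ≠ x over domain ℕ with τ(○x = x) = {(a,a) | a ∈ ℕ} and τ(○x ≠ x) = {(a,b) ∈ ℕ² | a ≠ b}, the trace of length 2 with x undefined at both states and in both components satisfies ¬(○x ≠ x) at 0 but not ○x = x at 0. -/
namespace THTc

/-- A partial valuation: variables to domain values, `none` is the undefined value `u`. -/
abbrev Valu (X D : Type) := X → Option D

/-- A trace: a sequence of partial valuations (only indices `< lam` are relevant). -/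
abbrev Trace (X D : Type) := ℕ → Valu X D

/-- Pointwise order `vh ⊑ vt` on traces of length `lam`. -/
def sub {X D : Type} (lam : ℕ) (v w : Trace X D) : Prop :=
  ∀ i, i < lam → ∀ x d, v i x = some d → w i x = some d

/-- Value of the temporal term `○^o x` at time `i` in a trace of length `lam`. -/
def tval {X D : Type} (lam : ℕ) (v : Trace X D) (i : ℕ) (o : ℤ) (x : X) : Option D :=
  if 0 ≤ (i : ℤ) + o ∧ (i : ℤ) + o < (lam : ℤ) then v ((i : ℤ) + o).toNat x else none

/-- Temporal constraint formulas of THTc. An atom `c(○^{o₁}x₁, …, ○^{oₙ}xₙ)` is given by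
its arity `n`, offsets, variables, and its solution relation `rel ⊆ (D ∪ {u})ⁿ`. -/
inductive Fml (X D : Type) : Type where
  | atom (n : ℕ) (off : Fin n → ℤ) (var : Fin n → X) (rel : Set (Fin n → Option D))
  | bot
  | and (φ ψ : Fml X D)
  | or (φ ψ : Fml X D)
  | imp (φ ψ : Fml X D)
  | next (φ : Fml X D)
  | until (φ ψ : Fml X D)
  | release (φ ψ : Fml X D)
  | prev (φ : Fml X D)
  | since (φ ψ : Fml X D)
  | trigger (φ ψ : Fml X D)

/-- THTc satisfaction `⟨vh,vt⟩, i ⊨ φ` for traces of length `lam`. -/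
def Sat {X D : Type} (lam : ℕ) (vt : Trace X D) : Fml X D → Trace X D → ℕ → Prop
  | .atom n off var rel, vh, i =>
      (fun k => tval lam vh i (off k) (var k)) ∈ rel ∧
      (fun k => tval lam vt i (off k) (var k)) ∈ rel
  | .bot, _, _ => False
  | .and φ ψ, vh, i => Sat lam vt φ vh i ∧ Sat lam vt ψ vh i
  | .or φ ψ, vh, i => Sat lam vt φ vh i ∨ Sat lam vt ψ vh i
  | .imp φ ψ, vh, i =>
      (Sat lam vt φ vh i → Sat lam vt ψ vh i) ∧
      (Sat lam vt φ vt i → Sat lam vt ψ vt i)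
  | .next φ, vh, i => i + 1 < lam ∧ Sat lam vt φ vh (i + 1)
  | .until φ ψ, vh, i =>
      ∃ k, i ≤ k ∧ k < lam ∧ Sat lam vt ψ vh k ∧ ∀ j, i ≤ j → j < k → Sat lam vt φ vh j
  | .release φ ψ, vh, i =>
      ∀ k, i ≤ k → k < lam → Sat lam vt ψ vh k ∨ ∃ j, i ≤ j ∧ j < k ∧ Sat lam vt φ vh j
  | .prev φ, vh, i => 0 < i ∧ Sat lam vt φ vh (i - 1)
  | .since φ ψ, vh, i =>
      ∃ k, k ≤ i ∧ Sat lam vt ψ vh k ∧ ∀ j, k < j → j ≤ i → Sat lam vt φ vh j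
  | .trigger φ ψ, vh, i =>
      ∀ k, k ≤ i → Sat lam vt ψ vh k ∨ ∃ j, k < j ∧ j ≤ i ∧ Sat lam vt φ vh j

/-- Negation `¬φ := φ → ⊥`. -/
def neg {X D : Type} (φ : Fml X D) : Fml X D := φ.imp .bot

/-- Truth `⊤ := ¬⊥`. -/
def top {X D : Type} : Fml X D := neg .bot

end THTc

open THTc

/-- The totally undefined trace over one variable with domain `ℕ`. -/
def vz : Trace Unit ℕ := fun _ _ => none

/-- Solution relation of `○x = x`: `{(a,a) | a ∈ ℕ}` (strict). -/
def relEq : Set (Fin 2 → Option ℕ) := {f | ∃ a : ℕ, f 0 = some a ∧ f 1 = some a}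

/-- Solution relation of `○x ≠ x`: `{(a,b) ∈ ℕ² | a ≠ b}` (strict, complement). -/
def relNe : Set (Fin 2 → Option ℕ) :=
  {f | ∃ a b : ℕ, a ≠ b ∧ f 0 = some a ∧ f 1 = some b}

/-- Offsets of the two terms `○x` and `x`. -/
def offs : Fin 2 → ℤ := ![1, 0]

/-- Both terms use the single variable `x`. -/
def vars : Fin 2 → Unit := fun _ => ()

/-- The converse of the complement property fails: the trace of length 2 with
`x` undefined everywhere (in both components) satisfies `¬(○x ≠ x)` at time 0
but does not satisfy `○x = x` at time 0. -/
theorem complement_converse_fails :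
    Sat 2 vz (neg (Fml.atom 2 offs vars relNe)) vz 0 ∧
    ¬ Sat 2 vz (Fml.atom 2 offs vars relEq) vz 0 := by
  have h : ∀ R : Set (Fin 2 → Option ℕ),
      (∀ f ∈ R, f 0 ≠ none) →
      ¬ Sat 2 vz (Fml.atom 2 offs vars R) vz 0 := by
    intro R hR hs
    rcases hs with ⟨h1, _⟩
    exact hR _ h1 (by simp [tval, vz])
  constructor
  · refine ⟨fun hs => ?_, fun hs => ?_⟩ <;>
      exact h relNe (fun f ⟨a,b,_,hf,_⟩ => by simp [hf]) hs
  · exact h relEq (fun f ⟨a,hf,_⟩ => by simp [hf])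
end

section
/- Kamp-style translation correctness for next: for the HTc trace M and its corresponding QHT interpretation 𝓜 (with partial evaluable functions f_x such that σ_h(f_x(i)) = v_{h,i}(x) and σ_t(f_x(i)) = v_{t,i}(x)), and for every temporal formula φ and i < λ, M,i ⊨ ○φ iff 𝓜 ⊨ ST_t(○φ)[t/i], where ST_t(○φ) = ∃t'(t' = t+1) ∧ ST_{t'}(φ), assuming the correctness of the translation for φ. -/
open THTc

/-- Kamp-style translation correctness for `next`: given that `Q j` expresses
`𝓜 ⊨ ST_t(φ)[t/j]` for the QHT interpretation `𝓜` corresponding to the HTc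
trace `⟨vh,vt⟩` (induction hypothesis `IH`), we have `M, i ⊨ ○φ` iff
`𝓜 ⊨ ST_t(○φ)[t/i]`, where `ST_t(○φ) = ∃t'((t' = t+1) ∧ ST_{t'}(φ))` and the
quantifier ranges over the time constants `c < lam`. -/
theorem kamp_next {X D : Type} (lam : ℕ) (vh vt : Trace X D)
    (hsub : sub lam vh vt) (φ : Fml X D) (Q : ℕ → Prop)
    (IH : ∀ j, j < lam → (Sat lam vt φ vh j ↔ Q j)) (i : ℕ) (hi : i < lam) :
    Sat lam vt (Fml.next φ) vh i ↔ ∃ c, c < lam ∧ c = i + 1 ∧ Q c := by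
  show (i + 1 < lam ∧ Sat lam vt φ vh (i + 1)) ↔ _
  constructor
  · rintro ⟨h1, h2⟩
    exact ⟨i + 1, h1, rfl, (IH _ h1).1 h2⟩
  · rintro ⟨c, hc, rfl, hq⟩
    exact ⟨hc, (IH _ hc).2 hq⟩
end
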